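/- arXiv:2603.12029 — 2 statements merged into one kernel-verified Lean document; each statement's English description precedes it below -/
import Mathlib

section
/- Let E be a Banach lattice and (xₙ) a decreasing sequence in the positive cone E₊ (i.e., 0 ≤ x_{n+1} ≤ xₙ for all n) that converges weakly to 0. Then xₙ converges to 0 in norm. -/
open Filter Topology

section aux

variable {E : Type*} [NormedAddCommGroup E] [Lattice E] [HasSolidNorm E]
    [IsOrderedAddMonoid E] [NormedSpace ℝ E]

private lemma nonneg_of_two_pow_nsmul_nonneg {w : E} :
    ∀ k : ℕ, 0 ≤ (2 ^ k) • w → 0 ≤ w := by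
  intro k
  induction k with
  | zero => simpa using id
  | succ k ih =>
    intro h
    refine ih (nsmul_two_semiclosed ?_)
    rwa [← mul_nsmul, ← pow_succ]

/-- In a normed lattice which is also a real normed space, nonnegative scalar multiples of
nonnegative elements are nonnegative (proved via dyadic approximation and closedness of the
positive cone). -/
private lemma real_smul_nonneg {v : E} (hv : 0 ≤ v) {a : ℝ} (ha : 0 ≤ a) : 0 ≤ a • v := by
  have hclosed : IsClosed {t : ℝ | 0 ≤ t • v} := by
    have hc : Continuous fun t : ℝ => t • v := continuous_id.smul continuous_const
    exact isClosed_le continuous_const hc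
  -- dyadic approximations from below
  set d : ℕ → ℝ := fun k => (⌊a * 2 ^ k⌋₊ : ℝ) / 2 ^ k with hd
  have hdk : ∀ k, 0 ≤ d k • v := by
    intro k
    apply nonneg_of_two_pow_nsmul_nonneg (k := k)
    have : (2 ^ k : ℕ) • (d k • v) = (⌊a * 2 ^ k⌋₊ : ℕ) • v := by
      rw [← Nat.cast_smul_eq_nsmul ℝ, ← Nat.cast_smul_eq_nsmul ℝ (⌊a * 2 ^ k⌋₊), smul_smul]
      congr 1
      have h2k : (2 ^ k : ℝ) ≠ 0 := by positivity
      simp only [hd]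
      push_cast
      field_simp
    rw [this]
    exact nsmul_nonneg hv _
  have hdtend : Tendsto d atTop (𝓝 a) := by
    have hle : ∀ k, d k ≤ a := by
      intro k
      rw [hd, div_le_iff₀ (by positivity)]
      exact Nat.floor_le (by positivity)
    have hge : ∀ k, a - (1 / 2) ^ k ≤ d k := by
      intro k
      rw [hd, sub_le_iff_le_add, div_add' _ _ _ (by positivity : (2:ℝ) ^ k ≠ 0),
        le_div_iff₀ (by positivity)]
      have := Nat.lt_floor_add_one (a * 2 ^ k)
      have h1 : (1 / 2 : ℝ) ^ k * 2 ^ k = 1 := by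
        rw [← mul_pow]; norm_num
      nlinarith [this]
    have h1 : Tendsto (fun k : ℕ => a - (1 / 2 : ℝ) ^ k) atTop (𝓝 (a - 0)) :=
      tendsto_const_nhds.sub (tendsto_pow_atTop_nhds_zero_of_lt_one (by norm_num) (by norm_num))
    rw [sub_zero] at h1
    exact tendsto_of_tendsto_of_tendsto_of_le_of_le h1 tendsto_const_nhds hge hle
  have : Tendsto (fun k => d k • v) atTop (𝓝 (a • v)) :=
    (hdtend.smul tendsto_const_nhds)
  exact hclosed.mem_of_tendsto hdtend (Eventually.of_forall hdk)

private lemma real_smul_le_smul {a : ℝ} (ha : 0 ≤ a) {y z : E} (h : y ≤ z) : a • y ≤ a • z := by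
  have := real_smul_nonneg (sub_nonneg.2 h) ha
  rw [smul_sub] at this
  exact sub_nonneg.1 this

end aux

/-- Dini's theorem for Banach lattices: a decreasing sequence in the positive cone
that converges weakly to 0 converges to 0 in norm. -/
theorem stmt1 {E : Type*} [NormedAddCommGroup E] [Lattice E] [HasSolidNorm E]
    [IsOrderedAddMonoid E] [NormedSpace ℝ E]
    (x : ℕ → E) (hpos : ∀ n, 0 ≤ x n) (hdec : ∀ n, x (n + 1) ≤ x n)
    (hweak : ∀ φ : E →L[ℝ] ℝ, Tendsto (fun n => φ (x n)) atTop (𝓝 0)) :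
    Tendsto x atTop (𝓝 0) := by
  have hanti : Antitone x := antitone_nat_of_succ_le hdec
  set s : Set E := convexHull ℝ (Set.range x) with hs_def
  have hs : Convex ℝ s := convex_convexHull ℝ _
  -- Mazur: 0 is in the norm closure of the convex hull of the range
  have h0 : (0 : E) ∈ closure s := by
    have hB : Function.Injective ⇑(topDualPairing ℝ E).flip := by
      intro a b hab
      have h : ∀ φ : StrongDual ℝ E, φ (a - b) = 0 := by
        intro φ
        have := DFunLike.congr_fun hab φ
        simp only [LinearMap.flip_apply, topDualPairing_apply] at this
        simp [map_sub, this]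
      have := NormedSpace.eq_zero_of_forall_dual_eq_zero ℝ h
      exact sub_eq_zero.1 this
    have hw : Tendsto (fun n => (toWeakSpace ℝ E) (x n)) atTop (𝓝 ((toWeakSpace ℝ E) 0)) := by
      refine (WeakBilin.tendsto_iff_forall_eval_tendsto _ hB).2 ?_
      intro φ
      have := hweak φ
      show Tendsto (fun i => φ (x i)) atTop (𝓝 (φ 0))
      rw [map_zero]
      exact this
    have hmem : (toWeakSpace ℝ E) 0 ∈ closure ((toWeakSpace ℝ E) '' s) := by
      refine mem_closure_of_tendsto hw (Eventually.of_forall fun n => ?_)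
      exact Set.mem_image_of_mem _ (subset_convexHull ℝ _ (Set.mem_range_self n))
    rw [← hs.toWeakSpace_closure ℝ] at hmem
    obtain ⟨z, hz, hz0⟩ := hmem
    rwa [(toWeakSpace ℝ E).injective hz0] at hz
  -- every element of the convex hull eventually dominates the sequence
  have hsT : s ⊆ {y : E | ∃ m₀, ∀ m ≥ m₀, x m ≤ y} := by
    apply convexHull_min
    · rintro - ⟨n, rfl⟩
      exact ⟨n, fun m hm => hanti hm⟩
    · rintro y ⟨m₁, h₁⟩ z ⟨m₂, h₂⟩ a b ha hb hab
      refine ⟨max m₁ m₂, fun m hm => ?_⟩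
      have hxm : x m = a • x m + b • x m := by
        rw [← add_smul, hab, one_smul]
      rw [hxm]
      exact add_le_add (real_smul_le_smul ha (h₁ m (le_of_max_le_left hm)))
        (real_smul_le_smul hb (h₂ m (le_of_max_le_right hm)))
  rw [NormedAddCommGroup.tendsto_nhds_zero]
  intro ε hε
  obtain ⟨y, hy, hylt⟩ := Metric.mem_closure_iff.1 h0 ε hε
  rw [dist_zero_left] at hylt
  obtain ⟨m₀, hm₀⟩ := hsT hy
  rw [eventually_atTop]
  refine ⟨m₀, fun m hm => lt_of_le_of_lt ?_ hylt⟩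
  refine HasSolidNorm.solid ?_
  rw [abs_of_nonneg (hpos m)]
  exact (hm₀ m hm).trans (le_abs_self y)
end

section
/- Let T be a C₀-semigroup on a Banach space X with generator A, let B ∈ L(V, X₋₁) and suppose there exists λ₀ > ω₀(T) such that for all v ∈ V, sup_{λ ≥ λ₀} ‖λ R(λ, A₋₁) B v‖_X < ∞ (i.e., sup ‖λ Dλ v‖ < ∞ with Dλ = R(λ,A₋₁)B). Then B is L¹-admissible for A: for every t > 0 and v ∈ L¹(0,t;V), the integral ∫₀ᵗ T₋₁(t-s) B v(s) ds belongs to X. -/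
open Filter Topology MeasureTheory
open Set Real

set_option maxHeartbeats 1000000

open Filter Topology MeasureTheory Set Real

lemma aux_cont {E : Type*} [NormedAddCommGroup E] [NormedSpace ℝ E]
    (S : ℝ → E →L[ℝ] E) (hc : ∀ x : E, ContinuousOn (fun s => S s x) (Set.Ici 0))
    {N ν : ℝ} (hN : ∀ s, 0 ≤ s → ‖S s‖ ≤ N * Real.exp (ν * s)) :
    Continuous (fun p : ℝ × E => S (max p.1 0) p.2) := by
  have hm : Continuous fun p : ℝ × E => max p.1 0 := (continuous_fst.max continuous_const)
  have hmem : ∀ p : ℝ × E, max p.1 0 ∈ Set.Ici (0:ℝ) := fun p => Set.mem_Ici.mpr (le_max_right _ _)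
  rw [continuous_iff_continuousAt]
  intro p₀
  have h₂ : ContinuousAt (fun p : ℝ × E => S (max p.1 0) p₀.2) p₀ := by
    have : ContinuousOn ((fun s => S s p₀.2) ∘ fun p : ℝ × E => max p.1 0) Set.univ :=
      (hc p₀.2).comp hm.continuousOn (fun p _ => hmem p)
    exact (continuousOn_univ.mp this).continuousAt
  have h₁ : Tendsto (fun p : ℝ × E => S (max p.1 0) (p.2 - p₀.2)) (𝓝 p₀) (𝓝 0) := by
    have hb : ∀ p : ℝ × E, ‖S (max p.1 0) (p.2 - p₀.2)‖ ≤
        (N * Real.exp (ν * max p.1 0)) * ‖p.2 - p₀.2‖ := by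
      intro p
      calc ‖S (max p.1 0) (p.2 - p₀.2)‖ ≤ ‖S (max p.1 0)‖ * ‖p.2 - p₀.2‖ :=
            (S (max p.1 0)).le_opNorm _
        _ ≤ (N * Real.exp (ν * max p.1 0)) * ‖p.2 - p₀.2‖ := by
            apply mul_le_mul_of_nonneg_right (hN _ (hmem p)) (norm_nonneg _)
    have hg : Tendsto (fun p : ℝ × E => (N * Real.exp (ν * max p.1 0)) * ‖p.2 - p₀.2‖)
        (𝓝 p₀) (𝓝 0) := by
      have : Continuous fun p : ℝ × E => (N * Real.exp (ν * max p.1 0)) * ‖p.2 - p₀.2‖ := by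
        continuity
      have h0 := this.continuousAt (x := p₀)
      unfold ContinuousAt at h0
      simpa using h0
    exact squeeze_zero_norm hb hg
  have key : ContinuousAt (fun p : ℝ × E =>
      S (max p.1 0) (p.2 - p₀.2) + S (max p.1 0) p₀.2) p₀ := by
    have : Tendsto (fun p : ℝ × E => S (max p.1 0) (p.2 - p₀.2) + S (max p.1 0) p₀.2) (𝓝 p₀)
        (𝓝 (0 + S (max p₀.1 0) p₀.2)) := h₁.add h₂
    simpa [ContinuousAt] using this
  have : (fun p : ℝ × E => S (max p.1 0) (p.2 - p₀.2) + S (max p.1 0) p₀.2)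
      = fun p : ℝ × E => S (max p.1 0) p.2 := by
    funext p
    rw [← map_add]
    simp
  rwa [this] at key

lemma aux_Tbound {X : Type*} [NormedAddCommGroup X] [NormedSpace ℝ X] [CompleteSpace X]
    (T : ℝ → (X →L[ℝ] X))
    (hTsemi : ∀ s t : ℝ, 0 ≤ s → 0 ≤ t → T (s + t) = (T s).comp (T t))
    (hTcont : ∀ x : X, ContinuousOn (fun t => T t x) (Set.Ici 0)) :
    ∃ C₁ ω₁ : ℝ, 1 ≤ C₁ ∧ 0 ≤ ω₁ ∧ ∀ s, 0 ≤ s → ‖T s‖ ≤ C₁ * Real.exp (ω₁ * s) := by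
  obtain ⟨K, hK⟩ : ∃ K, ∀ i : Set.Icc (0:ℝ) 1, ‖T i‖ ≤ K := by
    apply banach_steinhaus (g := fun i : Set.Icc (0:ℝ) 1 => T i)
    intro x
    obtain ⟨C, hC⟩ := (isCompact_Icc (a := (0:ℝ)) (b := 1)).exists_bound_of_continuousOn
      ((hTcont x).mono (fun s hs => hs.1))
    exact ⟨C, fun i => hC i i.2⟩
  set C₁ := max K 1 with hC₁def
  have hC₁ : 1 ≤ C₁ := le_max_right _ _
  have hC₁0 : 0 < C₁ := lt_of_lt_of_le one_pos hC₁
  have hbase : ∀ s, 0 ≤ s → s ≤ 1 → ‖T s‖ ≤ C₁ := by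
    intro s h0 h1
    exact le_trans (hK ⟨s, h0, h1⟩) (le_max_left _ _)
  have key : ∀ n : ℕ, ∀ s : ℝ, 0 ≤ s → s ≤ (n:ℝ) + 1 → ‖T s‖ ≤ C₁ ^ (n + 1) := by
    intro n
    induction n with
    | zero => intro s h0 h1; simpa using hbase s h0 (by simpa using h1)
    | succ n ih =>
      intro s h0 h1
      by_cases hs : s ≤ (n:ℝ) + 1
      · calc ‖T s‖ ≤ C₁ ^ (n+1) := ih s h0 hs
          _ ≤ C₁ ^ (n+2) := by
              apply pow_le_pow_right₀ hC₁ (by omega)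
      · push_neg at hs
        have h0' : (0:ℝ) ≤ s - 1 := by linarith
        have : T s = (T (s-1)).comp (T 1) := by
          have := hTsemi (s-1) 1 h0' zero_le_one
          simpa using this
        calc ‖T s‖ ≤ ‖T (s-1)‖ * ‖T 1‖ := by rw [this]; exact (T (s-1)).opNorm_comp_le _
          _ ≤ C₁ ^ (n+1) * C₁ := by
              apply mul_le_mul (ih (s-1) h0' (by push_cast at h1 ⊢; linarith))
                (hbase 1 zero_le_one le_rfl) (norm_nonneg _)
                (pow_nonneg hC₁0.le _)
          _ = C₁ ^ (n+2) := by ring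
  refine ⟨C₁, Real.log C₁, hC₁, Real.log_nonneg hC₁, ?_⟩
  intro s h0
  have h1 : s ≤ (⌊s⌋₊ : ℝ) + 1 := (Nat.lt_floor_add_one s).le
  calc ‖T s‖ ≤ C₁ ^ (⌊s⌋₊ + 1) := key _ s h0 h1
    _ = C₁ * C₁ ^ (⌊s⌋₊) := by ring
    _ = C₁ * Real.exp ((⌊s⌋₊ : ℝ) * Real.log C₁) := by
        rw [Real.exp_nat_mul, Real.exp_log hC₁0]
    _ ≤ C₁ * Real.exp (Real.log C₁ * s) := by
        apply mul_le_mul_of_nonneg_left _ hC₁0.le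
        apply Real.exp_le_exp.mpr
        have h2 := Nat.floor_le h0
        have h3 := Real.log_nonneg hC₁
        nlinarith

lemma aux_lap {E : Type*} [NormedAddCommGroup E] [NormedSpace ℝ E]
    (S : ℝ → E →L[ℝ] E) (hc : ∀ x : E, ContinuousOn (fun s => S s x) (Set.Ici 0))
    {N ν : ℝ} (hN : ∀ s, 0 ≤ s → ‖S s‖ ≤ N * Real.exp (ν * s))
    {μ : ℝ} (hμ : ν < μ) (y : E) :
    IntegrableOn (fun r => Real.exp (-μ * r) • S r y) (Set.Ioi 0) := by
  have hmeas : AEStronglyMeasurable (fun r => Real.exp (-μ * r) • S r y)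
      (volume.restrict (Set.Ioi (0:ℝ))) := by
    apply ContinuousOn.aestronglyMeasurable _ measurableSet_Ioi
    exact ((Real.continuous_exp.comp (continuous_const.mul continuous_id)).continuousOn).smul
      ((hc y).mono (fun r hr => Set.mem_Ici.mpr (le_of_lt hr)))
  have hg : IntegrableOn (fun r => (N * ‖y‖) * Real.exp (-(μ - ν) * r)) (Set.Ioi (0:ℝ)) :=
    (exp_neg_integrableOn_Ioi 0 (by linarith)).const_mul _
  apply Integrable.mono' hg hmeas
  rw [ae_restrict_iff' measurableSet_Ioi]
  filter_upwards with r hr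
  have hr0 : (0:ℝ) ≤ r := le_of_lt hr
  have h1 : ‖Real.exp (-μ * r) • S r y‖ = Real.exp (-μ * r) * ‖S r y‖ := by
    rw [norm_smul, Real.norm_eq_abs, abs_of_pos (Real.exp_pos _)]
  rw [h1]
  have h2 : ‖S r y‖ ≤ (N * Real.exp (ν * r)) * ‖y‖ :=
    le_trans ((S r).le_opNorm y) (mul_le_mul_of_nonneg_right (hN r hr0) (norm_nonneg _))
  calc Real.exp (-μ * r) * ‖S r y‖ ≤ Real.exp (-μ * r) * ((N * Real.exp (ν * r)) * ‖y‖) :=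
        mul_le_mul_of_nonneg_left h2 (Real.exp_pos _).le
    _ = (N * ‖y‖) * Real.exp (-(μ - ν) * r) := by
        have h3 : Real.exp (-μ * r) * Real.exp (ν * r) = Real.exp (-(μ - ν) * r) := by
          rw [← Real.exp_add]; congr 1; ring
        calc Real.exp (-μ * r) * (N * Real.exp (ν * r) * ‖y‖)
            = (N * ‖y‖) * (Real.exp (-μ * r) * Real.exp (ν * r)) := by ring
          _ = (N * ‖y‖) * Real.exp (-(μ - ν) * r) := by rw [h3]

open Filter Topology MeasureTheory Set Real

lemma aux_intOn {V E : Type*} [NormedAddCommGroup V] [NormedSpace ℝ V]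
    [NormedAddCommGroup E] [NormedSpace ℝ E]
    (S : ℝ → E →L[ℝ] E) (hSJ : Continuous fun p : ℝ × E => S (max p.1 0) p.2)
    {N ν : ℝ} (hN : ∀ s, 0 ≤ s → ‖S s‖ ≤ N * Real.exp (ν * s))
    (L : V →L[ℝ] E) {t : ℝ} {u : ℝ → V} (hu : IntegrableOn u (Set.Ioc 0 t)) :
    IntegrableOn (fun s => S (t - s) (L (u s))) (Set.Ioc 0 t) := by
  have hmeas0 : AEStronglyMeasurable (fun s => (t - s, L (u s)) : ℝ → ℝ × E)
      (volume.restrict (Set.Ioc 0 t)) :=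
    ((continuous_const.sub continuous_id).aestronglyMeasurable).prodMk
      (L.continuous.comp_aestronglyMeasurable hu.aestronglyMeasurable)
  have hmeas1 : AEStronglyMeasurable (fun s => S (max (t - s) 0) (L (u s)))
      (volume.restrict (Set.Ioc 0 t)) := hSJ.comp_aestronglyMeasurable hmeas0
  have hmeas : AEStronglyMeasurable (fun s => S (t - s) (L (u s)))
      (volume.restrict (Set.Ioc 0 t)) := by
    apply hmeas1.congr
    rw [Filter.EventuallyEq, ae_restrict_iff' measurableSet_Ioc]
    filter_upwards with s hs
    rw [max_eq_left (by linarith [hs.2] : (0:ℝ) ≤ t - s)]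
  set N' : ℝ := max N 0 with hN'def
  have hN' : ∀ s, 0 ≤ s → ‖S s‖ ≤ N' * Real.exp (ν * s) := fun s hs =>
    le_trans (hN s hs) (mul_le_mul_of_nonneg_right (le_max_left _ _) (Real.exp_pos _).le)
  have hN'0 : 0 ≤ N' := le_max_right _ _
  apply Integrable.mono' ((hu.norm.const_mul (N' * Real.exp (|ν| * t) * ‖L‖))) hmeas
  rw [ae_restrict_iff' measurableSet_Ioc]
  filter_upwards with s hs
  have h1 : (0:ℝ) ≤ t - s := by linarith [hs.2]
  have h2 : ν * (t - s) ≤ |ν| * t := by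
    calc ν * (t - s) ≤ |ν| * (t - s) := mul_le_mul_of_nonneg_right (le_abs_self _) h1
      _ ≤ |ν| * t := mul_le_mul_of_nonneg_left (by linarith [hs.1]) (abs_nonneg _)
  calc ‖S (t - s) (L (u s))‖ ≤ ‖S (t - s)‖ * ‖L (u s)‖ := (S (t-s)).le_opNorm _
    _ ≤ (N' * Real.exp (|ν| * t)) * (‖L‖ * ‖u s‖) := by
        apply mul_le_mul (le_trans (hN' _ h1) ?_) (L.le_opNorm _) (norm_nonneg _)
          (by positivity)
        exact mul_le_mul_of_nonneg_left (Real.exp_le_exp.mpr h2) hN'0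
    _ = N' * Real.exp (|ν| * t) * ‖L‖ * ‖u s‖ := by ring
/-- Desch–Schappacher type L¹-admissibility: if `sup_{λ ≥ λ₀} ‖λ Dλ v‖_X < ∞` for all
`v ∈ V`, where `Dλ = R(λ, A₋₁) B` takes values in `X`, then `B` is L¹-admissible for
`A`: the input maps `Φₜ v = ∫₀ᵗ T₋₁(t-s) B v(s) ds` take values in `X`. -/
theorem stmt17 {X V Xm1 : Type*}
    [NormedAddCommGroup X] [NormedSpace ℝ X] [CompleteSpace X]
    [NormedAddCommGroup V] [NormedSpace ℝ V] [CompleteSpace V]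
    [NormedAddCommGroup Xm1] [NormedSpace ℝ Xm1] [CompleteSpace Xm1]
    (ι : X →L[ℝ] Xm1) (hι : Function.Injective ι) (hdense : DenseRange ι)
    (T : ℝ → (X →L[ℝ] X)) (Tm1 : ℝ → (Xm1 →L[ℝ] Xm1))
    (hT0 : T 0 = ContinuousLinearMap.id ℝ X)
    (hTsemi : ∀ s t : ℝ, 0 ≤ s → 0 ≤ t → T (s + t) = (T s).comp (T t))
    (hTcont : ∀ x : X, ContinuousOn (fun t => T t x) (Set.Ici 0))
    (hinter : ∀ t : ℝ, 0 ≤ t → ∀ x : X, Tm1 t (ι x) = ι (T t x))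
    (ω : ℝ) (M : ℝ)
    (hgrowth : ∀ t : ℝ, 0 ≤ t → ‖Tm1 t‖ ≤ M * Real.exp (ω * t))
    (B : V →L[ℝ] Xm1)
    (R : ℝ → (Xm1 →L[ℝ] Xm1)) (lam0 : ℝ) (hlam0 : ω < lam0)
    (hR : ∀ lam ≥ lam0, ∀ y : Xm1,
      R lam y = ∫ t in Set.Ioi (0:ℝ), Real.exp (-lam * t) • Tm1 t y)
    (D : ℝ → (V →L[ℝ] X))
    (hD : ∀ lam ≥ lam0, ∀ v : V, ι (D lam v) = R lam (B v))
    (hbdd : ∀ v : V, ∃ Cv : ℝ, ∀ lam ≥ lam0, ‖lam • D lam v‖ ≤ Cv) :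
    ∀ t > (0:ℝ), ∀ v : ℝ → V,
      IntegrableOn v (Set.Ioc 0 t) →
      IntegrableOn (fun s => Tm1 (t - s) (B (v s))) (Set.Ioc 0 t) →
      ∃ x : X, ι x = ∫ s in (0:ℝ)..t, Tm1 (t - s) (B (v s)) := by
  -- Phase 1: basic facts
  have hTm1_0 : ∀ y : Xm1, Tm1 0 y = y := by
    have : ⇑(Tm1 0) = (id : Xm1 → Xm1) := by
      apply hdense.equalizer (Tm1 0).continuous continuous_id
      funext x
      simp only [Function.comp_apply, id_eq]
      rw [hinter 0 le_rfl x, hT0]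
      rfl
    intro y; rw [this]; rfl
  have hsemi : ∀ s r : ℝ, 0 ≤ s → 0 ≤ r → ∀ y : Xm1, Tm1 (s + r) y = Tm1 s (Tm1 r y) := by
    intro s r hs hr
    have : ⇑(Tm1 (s + r)) = ⇑((Tm1 s).comp (Tm1 r)) := by
      apply hdense.equalizer (Tm1 (s+r)).continuous ((Tm1 s).comp (Tm1 r)).continuous
      funext x
      simp only [Function.comp_apply, ContinuousLinearMap.coe_comp']
      rw [hinter (s+r) (by linarith) x, hTsemi s r hs hr, hinter r hr x,
        hinter s hs (T r x)]
      rfl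
    intro y
    rw [this]; rfl
  set M' : ℝ := max M 1 with hM'def
  have hM'1 : (1:ℝ) ≤ M' := le_max_right _ _
  have hM' : ∀ s, 0 ≤ s → ‖Tm1 s‖ ≤ M' * Real.exp (ω * s) := fun s hs =>
    le_trans (hgrowth s hs)
      (mul_le_mul_of_nonneg_right (le_max_left _ _) (Real.exp_pos _).le)
  -- strong continuity of Tm1
  have hTm1cont : ∀ y : Xm1, ContinuousOn (fun s => Tm1 s y) (Set.Ici 0) := by
    intro y s₀ hs₀
    have hbigB : ∀ s, 0 ≤ s → s ≤ s₀ + 1 → ‖Tm1 s‖ ≤ M' * Real.exp (|ω| * (s₀ + 1)) := by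
      intro s h0 h1
      refine le_trans (hM' s h0) (mul_le_mul_of_nonneg_left (Real.exp_le_exp.mpr ?_)
        (by linarith))
      calc ω * s ≤ |ω| * s := mul_le_mul_of_nonneg_right (le_abs_self ω) h0
        _ ≤ |ω| * (s₀ + 1) := mul_le_mul_of_nonneg_left h1 (abs_nonneg ω)
    set bigB : ℝ := M' * Real.exp (|ω| * (s₀ + 1)) with hbigBdef
    have hbigBpos : 0 < bigB := by positivity
    rw [ContinuousWithinAt, Metric.tendsto_nhds]
    intro ε hε
    obtain ⟨x, hx⟩ := hdense.exists_dist_lt y (show 0 < ε / (3 * bigB) by positivity)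
    have hgc : ContinuousWithinAt (fun s => ι (T s x)) (Set.Ici 0) s₀ :=
      (ι.continuous.comp_continuousOn (hTcont x)) s₀ hs₀
    have hA := Metric.tendsto_nhds.mp hgc (ε/3) (by positivity)
    have hB : ∀ᶠ s in 𝓝[Set.Ici 0] s₀, s < s₀ + 1 :=
      Filter.eventually_iff_exists_mem.mpr ⟨Set.Iio (s₀+1),
        nhdsWithin_le_nhds (Iio_mem_nhds (by linarith)), fun s hs => hs⟩
    have hC : ∀ᶠ s in 𝓝[Set.Ici 0] s₀, s ∈ Set.Ici (0:ℝ) := self_mem_nhdsWithin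
    filter_upwards [hA, hB, hC] with s hA' hB' hC'
    have hd1 : dist (Tm1 s y) (Tm1 s (ι x)) ≤ bigB * (ε / (3 * bigB)) := by
      rw [dist_eq_norm, ← map_sub]
      calc ‖Tm1 s (y - ι x)‖ ≤ ‖Tm1 s‖ * ‖y - ι x‖ := (Tm1 s).le_opNorm _
        _ ≤ bigB * (ε / (3 * bigB)) := by
            apply mul_le_mul (hbigB s hC' hB'.le) _ (norm_nonneg _) hbigBpos.le
            rw [← dist_eq_norm]
            exact hx.le
    have hd3 : dist (Tm1 s₀ (ι x)) (Tm1 s₀ y) ≤ bigB * (ε / (3 * bigB)) := by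
      rw [dist_eq_norm, ← map_sub]
      calc ‖Tm1 s₀ (ι x - y)‖ ≤ ‖Tm1 s₀‖ * ‖ι x - y‖ := (Tm1 s₀).le_opNorm _
        _ ≤ bigB * (ε / (3 * bigB)) := by
            apply mul_le_mul (hbigB s₀ hs₀ (by linarith)) _ (norm_nonneg _) hbigBpos.le
            rw [← dist_eq_norm, dist_comm]
            exact hx.le
    have hd2 : dist (Tm1 s (ι x)) (Tm1 s₀ (ι x)) < ε/3 := by
      rw [hinter s hC' x, hinter s₀ hs₀ x]
      exact hA'
    have hbb : bigB * (ε / (3 * bigB)) = ε/3 := by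
      field_simp
    calc dist (Tm1 s y) (Tm1 s₀ y) ≤ dist (Tm1 s y) (Tm1 s (ι x)) +
          dist (Tm1 s (ι x)) (Tm1 s₀ (ι x)) + dist (Tm1 s₀ (ι x)) (Tm1 s₀ y) :=
        dist_triangle4 _ _ _ _
      _ < bigB * (ε / (3 * bigB)) + ε/3 + bigB * (ε / (3 * bigB)) := by
          exact add_lt_add_of_lt_of_le (add_lt_add_of_le_of_lt hd1 hd2) hd3
      _ = ε := by rw [hbb]; ring
  have hTm1J : Continuous (fun p : ℝ × Xm1 => Tm1 (max p.1 0) p.2) :=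
    aux_cont Tm1 hTm1cont hM'
  obtain ⟨C₁, ω₁, hC₁, hω₁, hTb⟩ := aux_Tbound T hTsemi hTcont
  have hTJ : Continuous (fun p : ℝ × X => T (max p.1 0) p.2) := aux_cont T hTcont hTb
  -- uniform bound on lam • D lam via Banach-Steinhaus
  obtain ⟨C₀, hC₀⟩ := banach_steinhaus
    (g := fun p : {l : ℝ // lam0 ≤ l} => ((p.1 : ℝ) • D p.1 : V →L[ℝ] X))
    (by
      intro w
      obtain ⟨Cv, hCv⟩ := hbdd w
      exact ⟨Cv, fun p => by simpa using hCv p.1 p.2⟩)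
  set C : ℝ := max C₀ 0 with hCdef
  have hCnn : 0 ≤ C := le_max_right _ _
  have hC : ∀ lam, lam0 ≤ lam → ∀ w : V, ‖lam • D lam w‖ ≤ C * ‖w‖ := by
    intro lam hlam w
    have h1 : ‖(lam • D lam : V →L[ℝ] X) w‖ ≤ ‖(lam • D lam : V →L[ℝ] X)‖ * ‖w‖ :=
      ContinuousLinearMap.le_opNorm _ _
    have h2 : ‖(lam • D lam : V →L[ℝ] X)‖ ≤ C₀ := hC₀ ⟨lam, hlam⟩
    simp only [ContinuousLinearMap.smul_apply] at h1
    exact le_trans h1 (mul_le_mul_of_nonneg_right (le_trans h2 (le_max_left _ _))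
      (norm_nonneg _))
  set μ0 : ℝ := max lam0 (max (ω + 1) (ω₁ + 1)) with hμ0def
  have hμ0lam : lam0 ≤ μ0 := le_max_left _ _
  have hμ0ω : ω < μ0 := lt_of_lt_of_le (by linarith) (le_trans (le_max_left _ _) (le_max_right _ _))
  have hμ0ω₁ : ω₁ < μ0 := lt_of_lt_of_le (by linarith)
    (le_trans (le_max_right _ _) (le_max_right _ _))
  have hμ0pos : (1:ℝ) ≤ μ0 := le_trans (by linarith) (le_trans (le_max_right _ _)
    (le_max_right _ _))
  have hLapTm1 : ∀ μ, ω < μ → ∀ y : Xm1,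
      IntegrableOn (fun r => Real.exp (-μ * r) • Tm1 r y) (Set.Ioi 0) :=
    fun μ hμ y => aux_lap Tm1 hTm1cont hM' hμ y
  have hLapT : ∀ μ, ω₁ < μ → ∀ x : X,
      IntegrableOn (fun r => Real.exp (-μ * r) • T r x) (Set.Ioi 0) :=
    fun μ hμ x => aux_lap T hTcont hTb hμ x
  have hRcomm : ∀ μ, μ0 ≤ μ → ∀ c, 0 ≤ c → ∀ z : Xm1, R μ (Tm1 c z) = Tm1 c (R μ z) := by
    intro μ hμ c hc z
    rw [hR μ (le_trans hμ0lam hμ), hR μ (le_trans hμ0lam hμ)]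
    rw [← (Tm1 c).integral_comp_comm (hLapTm1 μ (lt_of_lt_of_le hμ0ω hμ) z)]
    apply setIntegral_congr_fun measurableSet_Ioi
    intro r hr
    simp only [_root_.map_smul]
    congr 1
    rw [← hsemi r c (le_of_lt hr) hc z, ← hsemi c r hc (le_of_lt hr) z, add_comm]
  have hRι : ∀ μ, μ0 ≤ μ → ∀ x : X,
      R μ (ι x) = ι (∫ r in Set.Ioi (0:ℝ), Real.exp (-μ * r) • T r x) := by
    intro μ hμ x
    rw [hR μ (le_trans hμ0lam hμ),
      ← ι.integral_comp_comm (hLapT μ (lt_of_lt_of_le hμ0ω₁ hμ) x)]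
    apply setIntegral_congr_fun measurableSet_Ioi
    intro r hr
    simp only [_root_.map_smul]
    rw [hinter r (le_of_lt hr) x]
  -- Phase 3: the fundamental identity
  have key6 : ∀ μ, μ0 ≤ μ → ∀ y : Xm1, ∀ τ, 0 ≤ τ →
      Tm1 τ (R μ y) = μ • (∫ r in (0:ℝ)..τ, Tm1 r (R μ y)) -
        (∫ r in (0:ℝ)..τ, Tm1 r y) + R μ y := by
    intro μ hμ y τ hτ
    have hμω : ω < μ := lt_of_lt_of_le hμ0ω hμ
    have hμpos : (0:ℝ) < μ := lt_of_lt_of_le (by linarith) hμ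
    have hLap := hLapTm1 μ hμω y
    have hcy : ContinuousOn (fun r => Tm1 r y) (Set.Ici 0) := hTm1cont y
    have hcRy : ContinuousOn (fun r => Tm1 r (R μ y)) (Set.Ici 0) := hTm1cont (R μ y)
    have hcW : ContinuousOn (fun r => Real.exp (-μ*r) • Tm1 r y) (Set.Ici 0) :=
      ((Real.continuous_exp.comp (continuous_const.mul continuous_id)).continuousOn).smul hcy
    set W : ℝ → Xm1 := fun τ' => ∫ r in (0:ℝ)..τ', Real.exp (-μ*r) • Tm1 r y with hWdef
    set G : ℝ → Xm1 := fun τ' => ∫ r in (0:ℝ)..τ', Tm1 r (R μ y) with hGdef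
    set Jf : ℝ → Xm1 := fun τ' => ∫ r in (0:ℝ)..τ', Tm1 r y with hJdef
    have Hform : ∀ τ', 0 ≤ τ' →
        Tm1 τ' (R μ y) = Real.exp (μ*τ') • (R μ y - W τ') := by
      intro τ' hτ'
      have step1 : Tm1 τ' (R μ y) =
          ∫ r in Set.Ioi (0:ℝ), Real.exp (-μ * r) • Tm1 (τ' + r) y := by
        rw [hR μ (le_trans hμ0lam hμ), ← (Tm1 τ').integral_comp_comm hLap]
        apply setIntegral_congr_fun measurableSet_Ioi
        intro r hr
        simp only [_root_.map_smul]
        rw [← hsemi τ' r hτ' (le_of_lt hr) y]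
      have step2 : ∫ r in Set.Ioi (0:ℝ), Real.exp (-μ * r) • Tm1 (τ' + r) y =
          ∫ u in Set.Ioi τ', Real.exp (-μ * (u - τ')) • Tm1 u y := by
        have h1 : MeasurePreserving (fun x : ℝ => τ' + x) volume volume :=
          measurePreserving_add_left volume τ'
        have h2 : MeasurableEmbedding (fun x : ℝ => τ' + x) :=
          (MeasurableEquiv.addLeft τ').measurableEmbedding
        have h3 : (fun x : ℝ => τ' + x) ⁻¹' (Set.Ioi τ') = Set.Ioi 0 := by ext x; simp
        have hshift := h1.setIntegral_preimage_emb h2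
          (fun u => Real.exp (-μ * (u - τ')) • Tm1 u y) (Set.Ioi τ')
        rw [h3] at hshift
        rw [← hshift]
        apply setIntegral_congr_fun measurableSet_Ioi
        intro r _
        simp only [add_sub_cancel_left]
      have step3 : ∫ u in Set.Ioi τ', Real.exp (-μ * (u - τ')) • Tm1 u y =
          Real.exp (μ * τ') • ∫ u in Set.Ioi τ', Real.exp (-μ * u) • Tm1 u y := by
        rw [← integral_smul]
        apply setIntegral_congr_fun measurableSet_Ioi
        intro u _
        simp only [smul_smul, ← Real.exp_add]
        congr 2
        ring
      have step4 : ∫ u in Set.Ioi τ', Real.exp (-μ * u) • Tm1 u y =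
          R μ y - W τ' := by
        have hsplit : (∫ u in Set.Ioc 0 τ', Real.exp (-μ * u) • Tm1 u y) +
            (∫ u in Set.Ioi τ', Real.exp (-μ * u) • Tm1 u y) =
            ∫ u in Set.Ioi (0:ℝ), Real.exp (-μ * u) • Tm1 u y := by
          rw [← setIntegral_union (Set.Ioc_disjoint_Ioi le_rfl) measurableSet_Ioi
            (hLap.mono_set Set.Ioc_subset_Ioi_self) (hLap.mono_set (Set.Ioi_subset_Ioi hτ'))]
          rw [Set.Ioc_union_Ioi_eq_Ioi hτ']
        have hW : W τ' = ∫ u in Set.Ioc 0 τ', Real.exp (-μ * u) • Tm1 u y := by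
          rw [hWdef]
          exact intervalIntegral.integral_of_le hτ'
        rw [hR μ (le_trans hμ0lam hμ), hW]
        rw [← hsplit]
        abel
      rw [step1, step2, step3, step4]
    rcases eq_or_lt_of_le hτ with rfl | hτpos
    · rw [hTm1_0]
      simp [hGdef, hJdef]
    -- derivative of φ is zero on Ioi 0
    set φ : ℝ → Xm1 := fun s => Real.exp (μ*s) • (R μ y - W s) -
      (μ • G s - Jf s + R μ y) with hφdef
    have hderiv : ∀ τ' ∈ Set.Ioi (0:ℝ), HasDerivAt φ 0 τ' := by
      intro τ' hτ'
      have hIci : Set.Ici (0:ℝ) ∈ 𝓝 τ' :=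
        mem_of_superset (isOpen_Ioi.mem_nhds hτ') Set.Ioi_subset_Ici_self
      have huIcc : Set.uIcc (0:ℝ) τ' ⊆ Set.Ici 0 := by
        rw [Set.uIcc_of_le (le_of_lt hτ')]
        exact fun r hr => hr.1
      have hWd : HasDerivAt W (Real.exp (-μ*τ') • Tm1 τ' y) τ' :=
        intervalIntegral.integral_hasDerivAt_right
          ((hcW.mono huIcc).intervalIntegrable)
          ((hcW.mono (fun r (hr : r ∈ Set.Ioi (0:ℝ)) => Set.mem_Ici.mpr (le_of_lt hr))).stronglyMeasurableAtFilter
            isOpen_Ioi τ' hτ')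
          (hcW.continuousAt hIci)
      have hGd : HasDerivAt G (Tm1 τ' (R μ y)) τ' :=
        intervalIntegral.integral_hasDerivAt_right
          ((hcRy.mono huIcc).intervalIntegrable)
          ((hcRy.mono (fun r (hr : r ∈ Set.Ioi (0:ℝ)) => Set.mem_Ici.mpr (le_of_lt hr))).stronglyMeasurableAtFilter
            isOpen_Ioi τ' hτ')
          (hcRy.continuousAt hIci)
      have hJd : HasDerivAt Jf (Tm1 τ' y) τ' :=
        intervalIntegral.integral_hasDerivAt_right
          ((hcy.mono huIcc).intervalIntegrable)
          ((hcy.mono (fun r (hr : r ∈ Set.Ioi (0:ℝ)) => Set.mem_Ici.mpr (le_of_lt hr))).stronglyMeasurableAtFilter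
            isOpen_Ioi τ' hτ')
          (hcy.continuousAt hIci)
      have hEd : HasDerivAt (fun s : ℝ => Real.exp (μ*s)) (Real.exp (μ*τ') * μ) τ' := by
        have h := ((hasDerivAt_id τ').const_mul μ).exp
        simpa using h
      have h1 := hEd.smul (hWd.const_sub (R μ y))
      have h2 : HasDerivAt (fun s => μ • G s - Jf s + R μ y)
          (μ • Tm1 τ' (R μ y) - Tm1 τ' y) τ' :=
        ((hGd.const_smul μ).sub hJd).add_const (R μ y)
      have h3 := h1.sub h2
      have hzero : Real.exp (μ*τ') • (-(Real.exp (-μ*τ') • Tm1 τ' y)) +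
          (Real.exp (μ*τ') * μ) • (R μ y - W τ') -
          (μ • Tm1 τ' (R μ y) - Tm1 τ' y) = 0 := by
        have e1 : (Real.exp (μ*τ') * μ) • (R μ y - W τ') =
            μ • Tm1 τ' (R μ y) := by
          rw [Hform τ' (le_of_lt hτ'), mul_comm, mul_smul]
        have e2 : Real.exp (μ*τ') • (-(Real.exp (-μ*τ') • Tm1 τ' y)) = -(Tm1 τ' y) := by
          rw [smul_neg, smul_smul, ← Real.exp_add]
          have : μ * τ' + -μ * τ' = 0 := by ring
          rw [this, Real.exp_zero, one_smul]
        rw [e1, e2]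
        abel
      rw [hzero] at h3
      exact h3
    have hconst : ∀ ε, 0 < ε → ε ≤ τ → φ τ = φ ε := by
      intro ε hε hετ
      have := constant_of_has_deriv_right_zero (f := φ) (a := ε) (b := τ)
        (fun s hs => ((hderiv s (lt_of_lt_of_le hε hs.1)).continuousAt).continuousWithinAt)
        (fun s hs => (hderiv s (lt_of_lt_of_le hε hs.1)).hasDerivWithinAt)
      exact this τ ⟨hετ, le_rfl⟩
    -- φ (τ/(n+1)) → 0
    set Cb : ℝ := M' * Real.exp (|ω| * τ) * (‖y‖ + ‖R μ y‖) with hCbdef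
    have hCbnn : 0 ≤ Cb := by positivity
    have hbnd : ∀ z : Xm1, ‖z‖ ≤ ‖y‖ + ‖R μ y‖ → ∀ r, r ∈ Set.Ioc (0:ℝ) τ →
        ‖Tm1 r z‖ ≤ Cb := by
      intro z hz r hr
      calc ‖Tm1 r z‖ ≤ ‖Tm1 r‖ * ‖z‖ := (Tm1 r).le_opNorm z
        _ ≤ (M' * Real.exp (ω * r)) * ‖z‖ :=
            mul_le_mul_of_nonneg_right (hM' r (le_of_lt hr.1)) (norm_nonneg _)
        _ ≤ (M' * Real.exp (|ω| * τ)) * (‖y‖ + ‖R μ y‖) := by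
            apply mul_le_mul _ hz (norm_nonneg _) (by positivity)
            apply mul_le_mul_of_nonneg_left _ (by linarith)
            apply Real.exp_le_exp.mpr
            calc ω * r ≤ |ω| * r := mul_le_mul_of_nonneg_right (le_abs_self _) (le_of_lt hr.1)
              _ ≤ |ω| * τ := mul_le_mul_of_nonneg_left hr.2 (abs_nonneg _)
        _ = Cb := by rw [hCbdef]
    have hseq : ∀ n : ℕ, 0 < τ / ((n:ℝ)+1) ∧ τ / ((n:ℝ)+1) ≤ τ := by
      intro n
      constructor
      · positivity
      · rw [div_le_iff₀ (by positivity)]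
        nlinarith [Nat.cast_nonneg (α := ℝ) n]
    have hWb : ∀ n : ℕ, ‖W (τ / ((n:ℝ)+1))‖ ≤ Cb * (τ / ((n:ℝ)+1)) := by
      intro n
      have := intervalIntegral.norm_integral_le_of_norm_le_const
        (f := fun r => Real.exp (-μ*r) • Tm1 r y) (a := 0) (b := τ / ((n:ℝ)+1)) (C := Cb) ?_
      · rw [sub_zero, abs_of_pos (hseq n).1] at this
        exact this
      · intro r hr
        rw [Set.uIoc_of_le (le_of_lt (hseq n).1)] at hr
        have hrIoc : r ∈ Set.Ioc (0:ℝ) τ := ⟨hr.1, le_trans hr.2 (hseq n).2⟩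
        rw [norm_smul, Real.norm_eq_abs, abs_of_pos (Real.exp_pos _)]
        calc Real.exp (-μ*r) * ‖Tm1 r y‖ ≤ 1 * ‖Tm1 r y‖ := by
              apply mul_le_mul_of_nonneg_right _ (norm_nonneg _)
              apply Real.exp_le_one_iff.mpr
              nlinarith [hrIoc.1, hμpos]
          _ = ‖Tm1 r y‖ := one_mul _
          _ ≤ Cb := hbnd y (by nlinarith [norm_nonneg (R μ y)]) r hrIoc
    have hGb : ∀ n : ℕ, ‖G (τ / ((n:ℝ)+1))‖ ≤ Cb * (τ / ((n:ℝ)+1)) := by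
      intro n
      have := intervalIntegral.norm_integral_le_of_norm_le_const
        (f := fun r => Tm1 r (R μ y)) (a := 0) (b := τ / ((n:ℝ)+1)) (C := Cb) ?_
      · rw [sub_zero, abs_of_pos (hseq n).1] at this
        exact this
      · intro r hr
        rw [Set.uIoc_of_le (le_of_lt (hseq n).1)] at hr
        exact hbnd (R μ y) (by nlinarith [norm_nonneg y]) r ⟨hr.1, le_trans hr.2 (hseq n).2⟩
    have hJb : ∀ n : ℕ, ‖Jf (τ / ((n:ℝ)+1))‖ ≤ Cb * (τ / ((n:ℝ)+1)) := by
      intro n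
      have := intervalIntegral.norm_integral_le_of_norm_le_const
        (f := fun r => Tm1 r y) (a := 0) (b := τ / ((n:ℝ)+1)) (C := Cb) ?_
      · rw [sub_zero, abs_of_pos (hseq n).1] at this
        exact this
      · intro r hr
        rw [Set.uIoc_of_le (le_of_lt (hseq n).1)] at hr
        exact hbnd y (by nlinarith [norm_nonneg (R μ y)]) r ⟨hr.1, le_trans hr.2 (hseq n).2⟩
    have hseqto : Filter.Tendsto (fun n : ℕ => τ / ((n:ℝ)+1)) Filter.atTop (𝓝 0) := by
      have h1 : Filter.Tendsto (fun n : ℕ => ((n:ℝ)+1)) Filter.atTop Filter.atTop :=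
        Filter.tendsto_atTop_add_const_right _ 1 tendsto_natCast_atTop_atTop
      exact Filter.Tendsto.div_atTop tendsto_const_nhds h1
    have hφeq : ∀ ε : ℝ, φ ε = (Real.exp (μ*ε) - 1) • (R μ y) -
        Real.exp (μ*ε) • W ε - μ • G ε + Jf ε := by
      intro ε
      rw [hφdef]
      simp only [smul_sub, sub_smul, one_smul]
      abel
    have hφlim : Filter.Tendsto (fun n : ℕ => φ (τ / ((n:ℝ)+1))) Filter.atTop (𝓝 0) := by
      have hexp : Filter.Tendsto (fun n : ℕ => Real.exp (μ * (τ / ((n:ℝ)+1))))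
          Filter.atTop (𝓝 1) := by
        have h1 : Filter.Tendsto (fun n : ℕ => μ * (τ / ((n:ℝ)+1))) Filter.atTop (𝓝 0) := by
          simpa using hseqto.const_mul μ
        have := (Real.continuous_exp.tendsto 0).comp h1
        simpa [Function.comp_def] using this
      have t1 : Filter.Tendsto (fun n : ℕ => (Real.exp (μ * (τ / ((n:ℝ)+1))) - 1) • (R μ y))
          Filter.atTop (𝓝 0) := by
        have := (hexp.sub (tendsto_const_nhds (x := (1:ℝ)))).smul_const (R μ y)
        simpa using this
      have hCbτ : Filter.Tendsto (fun n : ℕ => Cb * (τ / ((n:ℝ)+1))) Filter.atTop (𝓝 0) := by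
        simpa using hseqto.const_mul Cb
      have t2 : Filter.Tendsto (fun n : ℕ => Real.exp (μ * (τ / ((n:ℝ)+1))) • W (τ / ((n:ℝ)+1)))
          Filter.atTop (𝓝 0) := by
        have hb2 : ∀ n : ℕ, ‖Real.exp (μ * (τ / ((n:ℝ)+1))) • W (τ / ((n:ℝ)+1))‖ ≤
            Real.exp (μ * τ) * (Cb * (τ / ((n:ℝ)+1))) := by
          intro n
          rw [norm_smul, Real.norm_eq_abs, abs_of_pos (Real.exp_pos _)]
          apply mul_le_mul _ (hWb n) (norm_nonneg _) (Real.exp_pos _).le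
          apply Real.exp_le_exp.mpr
          apply mul_le_mul_of_nonneg_left (hseq n).2 (le_of_lt hμpos)
        exact squeeze_zero_norm hb2 (by simpa using hCbτ.const_mul (Real.exp (μ * τ)))
      have t3 : Filter.Tendsto (fun n : ℕ => μ • G (τ / ((n:ℝ)+1))) Filter.atTop (𝓝 0) := by
        have hb3 : ∀ n : ℕ, ‖μ • G (τ / ((n:ℝ)+1))‖ ≤ μ * (Cb * (τ / ((n:ℝ)+1))) := by
          intro n
          rw [norm_smul, Real.norm_eq_abs, abs_of_pos hμpos]
          exact mul_le_mul_of_nonneg_left (hGb n) (le_of_lt hμpos)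
        exact squeeze_zero_norm hb3 (by simpa using hCbτ.const_mul μ)
      have t4 : Filter.Tendsto (fun n : ℕ => Jf (τ / ((n:ℝ)+1))) Filter.atTop (𝓝 0) :=
        squeeze_zero_norm (fun n => hJb n) hCbτ
      have := ((t1.sub t2).sub t3).add t4
      simp only [sub_zero, zero_sub, neg_zero, add_zero, zero_add] at this
      apply this.congr
      intro n
      rw [hφeq]
    have hφτ : φ τ = 0 := by
      have hconstseq : (fun n : ℕ => φ (τ / ((n:ℝ)+1))) = fun _ : ℕ => φ τ := by
        funext n
        exact (hconst _ (hseq n).1 (hseq n).2).symm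
      rw [hconstseq] at hφlim
      exact tendsto_nhds_unique tendsto_const_nhds hφlim
    have : Real.exp (μ*τ) • (R μ y - W τ) = μ • G τ - Jf τ + R μ y := by
      have := sub_eq_zero.mp hφτ
      exact this
    rw [Hform τ hτ, this]
  -- Phase 4: main estimate
  intro t ht v hv hint
  clear hint
  have hintV : ∀ u : ℝ → V, IntegrableOn u (Set.Ioc 0 t) →
      IntegrableOn (fun s => Tm1 (t - s) (B (u s))) (Set.Ioc 0 t) :=
    fun u hu => aux_intOn Tm1 hTm1J hM' B hu
  have hintX : ∀ (L : V →L[ℝ] X) (u : ℝ → V), IntegrableOn u (Set.Ioc 0 t) →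
      IntegrableOn (fun s => T (t - s) (L (u s))) (Set.Ioc 0 t) :=
    fun L u hu => aux_intOn T hTJ hTb L hu
  set K : ℝ := C₁ * Real.exp (ω₁ * t) * C with hKdef
  have hKnn : 0 ≤ K := by positivity
  have hbound : ∀ u : ℝ → V, IntegrableOn u (Set.Ioc 0 t) → ∀ x : X,
      ι x = ∫ s in Set.Ioc (0:ℝ) t, Tm1 (t - s) (B (u s)) →
      ‖x‖ ≤ K * ∫ s in Set.Ioc (0:ℝ) t, ‖u s‖ := by
    intro u hu x hx
    have hμn : ∀ n : ℕ, μ0 ≤ μ0 + n := fun n => le_add_of_nonneg_right (Nat.cast_nonneg n)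
    have hμnpos : ∀ n : ℕ, (0:ℝ) < μ0 + n := fun n => lt_of_lt_of_le (by linarith) (hμn n)
    have hμnlam : ∀ n : ℕ, lam0 ≤ μ0 + n := fun n => le_trans hμ0lam (hμn n)
    -- chain: R μn (ι x) = ι (∫ T (t-s) (D μn (u s)))
    have chainA : ∀ n : ℕ,
        ∫ s in Set.Ioc (0:ℝ) t, T (t - s) (D (μ0 + n) (u s)) =
        ∫ r in Set.Ioi (0:ℝ), Real.exp (-(μ0 + n) * r) • T r x := by
      intro n
      apply hι
      rw [← hRι (μ0+n) (hμn n) x, ← (ι.integral_comp_comm (hintX (D (μ0+n)) u hu)), hx,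
        ← ((R (μ0+n)).integral_comp_comm (hintV u hu))]
      apply setIntegral_congr_fun measurableSet_Ioc
      intro s hs
      have hts : (0:ℝ) ≤ t - s := by linarith [hs.2]
      show ι (T (t - s) (D (μ0+n) (u s))) = R (μ0+n) (Tm1 (t - s) (B (u s)))
      rw [hRcomm (μ0+n) (hμn n) (t-s) hts, ← hD (μ0+n) (hμnlam n) (u s),
        hinter (t-s) hts]
    set q : ℕ → X := fun n => (μ0 + (n:ℝ)) • ∫ s in Set.Ioc (0:ℝ) t, T (t - s) (D (μ0 + n) (u s))
      with hqdef
    -- rescaling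
    have hq2 : ∀ n : ℕ, q n = ∫ w in Set.Ioi (0:ℝ), Real.exp (-w) • T (w / (μ0 + n)) x := by
      intro n
      have hresc := integral_comp_mul_left_Ioi
        (g := fun w => Real.exp (-w) • T (w / (μ0 + (n:ℝ))) x) 0 (hμnpos n)
      rw [mul_zero] at hresc
      have hg : ∀ r ∈ Set.Ioi (0:ℝ),
          Real.exp (-((μ0 + (n:ℝ)) * r)) • T (((μ0 + (n:ℝ)) * r) / (μ0 + (n:ℝ))) x =
          Real.exp (-(μ0 + (n:ℝ)) * r) • T r x := by
        intro r _
        rw [mul_div_cancel_left₀ _ (ne_of_gt (hμnpos n)), neg_mul]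
      rw [setIntegral_congr_fun measurableSet_Ioi hg] at hresc
      rw [hqdef]
      simp only []
      rw [chainA n, hresc, smul_smul, mul_inv_cancel₀ (ne_of_gt (hμnpos n)), one_smul]
    -- limit of q
    have hatTop : Filter.Tendsto (fun n : ℕ => μ0 + (n:ℝ)) Filter.atTop Filter.atTop :=
      Filter.tendsto_atTop_add_const_left _ μ0 tendsto_natCast_atTop_atTop
    have hqlim : Filter.Tendsto q Filter.atTop (𝓝 x) := by
      have hlim0 : Filter.Tendsto (fun n : ℕ =>
          ∫ w in Set.Ioi (0:ℝ), Real.exp (-w) • T (w / (μ0 + n)) x) Filter.atTop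
          (𝓝 (∫ w in Set.Ioi (0:ℝ), Real.exp (-w) • x)) := by
        apply tendsto_integral_filter_of_dominated_convergence
          (bound := fun w => (C₁ * ‖x‖) * Real.exp (-(1/2) * w))
        · filter_upwards with n
          apply ContinuousOn.aestronglyMeasurable _ measurableSet_Ioi
          apply ContinuousOn.smul
          · exact (Real.continuous_exp.comp continuous_neg).continuousOn
          · apply (hTcont x).comp ((continuous_id.div_const _).continuousOn)
            intro w hw
            exact div_nonneg (le_of_lt hw) (hμnpos n).le
        · have hev := hatTop.eventually_ge_atTop (2 * ω₁)
          filter_upwards [hev] with n hn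
          rw [ae_restrict_iff' measurableSet_Ioi]
          filter_upwards with w hw
          have hw0 : (0:ℝ) < w := hw
          have h1 : ‖Real.exp (-w) • T (w / (μ0 + n)) x‖ ≤
              Real.exp (-w) * ((C₁ * Real.exp (ω₁ * (w / (μ0 + n)))) * ‖x‖) := by
            rw [norm_smul, Real.norm_eq_abs, abs_of_pos (Real.exp_pos _)]
            apply mul_le_mul_of_nonneg_left _ (Real.exp_pos _).le
            exact le_trans ((T _).le_opNorm x) (mul_le_mul_of_nonneg_right
              (hTb _ (div_nonneg hw0.le (hμnpos n).le)) (norm_nonneg _))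
          apply le_trans h1
          have h2 : ω₁ * (w / (μ0 + n)) ≤ w / 2 := by
            rw [mul_div_assoc']
            rw [div_le_div_iff₀ (hμnpos n) (by norm_num)]
            nlinarith [hω₁, hw0.le]
          calc Real.exp (-w) * ((C₁ * Real.exp (ω₁ * (w / (μ0 + n)))) * ‖x‖)
              ≤ Real.exp (-w) * ((C₁ * Real.exp (w / 2)) * ‖x‖) := by
                apply mul_le_mul_of_nonneg_left _ (Real.exp_pos _).le
                apply mul_le_mul_of_nonneg_right _ (norm_nonneg _)
                exact mul_le_mul_of_nonneg_left (Real.exp_le_exp.mpr h2) (by linarith)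
            _ = (C₁ * ‖x‖) * (Real.exp (-w) * Real.exp (w / 2)) := by ring
            _ = (C₁ * ‖x‖) * Real.exp (-(1/2) * w) := by
                rw [← Real.exp_add]
                congr 1
                ring
        · exact (exp_neg_integrableOn_Ioi 0 (by norm_num : (0:ℝ) < 1/2)).const_mul _
        · rw [ae_restrict_iff' measurableSet_Ioi]
          filter_upwards with w hw
          have h1 : Filter.Tendsto (fun n : ℕ => w / (μ0 + n)) Filter.atTop (𝓝 0) :=
            Filter.Tendsto.div_atTop tendsto_const_nhds hatTop
          have h2 : Filter.Tendsto (fun n : ℕ => w / (μ0 + n)) Filter.atTop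
              (𝓝[Set.Ici 0] 0) := by
            apply tendsto_nhdsWithin_of_tendsto_nhds_of_eventually_within _ h1
            filter_upwards with n
            exact div_nonneg (le_of_lt hw) (hμnpos n).le
          have h3 := ((hTcont x) 0 Set.self_mem_Ici).tendsto.comp h2
          rw [hT0] at h3
          have h4 := h3.const_smul (Real.exp (-w))
          simpa using h4
      have heval : ∫ w in Set.Ioi (0:ℝ), Real.exp (-w) • x = x := by
        rw [integral_smul_const, integral_exp_neg_Ioi_zero, one_smul]
      rw [heval] at hlim0
      apply hlim0.congr
      intro n
      exact (hq2 n).symm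
    -- bound on q
    have hqbd : ∀ n : ℕ, ‖q n‖ ≤ K * ∫ s in Set.Ioc (0:ℝ) t, ‖u s‖ := by
      intro n
      have hqn : q n = ∫ s in Set.Ioc (0:ℝ) t, T (t - s) ((μ0 + (n:ℝ)) • D (μ0 + n) (u s)) := by
        rw [hqdef]
        simp only []
        rw [← integral_smul]
        apply setIntegral_congr_fun measurableSet_Ioc
        intro s _
        simp only [_root_.map_smul]
      rw [hqn]
      have hKu : Integrable (fun s => K * ‖u s‖) (volume.restrict (Set.Ioc (0:ℝ) t)) :=
        hu.norm.const_mul K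
      have := norm_integral_le_of_norm_le (f := fun s => T (t - s) ((μ0 + (n:ℝ)) • D (μ0 + n) (u s))) hKu ?_
      · rw [integral_const_mul] at this
        exact this
      · rw [ae_restrict_iff' measurableSet_Ioc]
        filter_upwards with s hs
        have hts : (0:ℝ) ≤ t - s := by linarith [hs.2]
        calc ‖T (t - s) ((μ0 + (n:ℝ)) • D (μ0 + n) (u s))‖
            ≤ ‖T (t - s)‖ * ‖(μ0 + (n:ℝ)) • D (μ0 + n) (u s)‖ := (T _).le_opNorm _
          _ ≤ (C₁ * Real.exp (ω₁ * t)) * (C * ‖u s‖) := by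
              apply mul_le_mul _ (hC (μ0 + n) (hμnlam n) (u s)) (norm_nonneg _) (by positivity)
              apply le_trans (hTb _ hts)
              apply mul_le_mul_of_nonneg_left _ (by linarith)
              apply Real.exp_le_exp.mpr
              apply mul_le_mul_of_nonneg_left (by linarith [hs.1]) hω₁
          _ = K * ‖u s‖ := by rw [hKdef]; ring
    have hnormlim : Filter.Tendsto (fun n => ‖q n‖) Filter.atTop (𝓝 ‖x‖) :=
      (continuous_norm.tendsto x).comp hqlim
    exact le_of_tendsto hnormlim (Filter.Eventually.of_forall hqbd)
  -- Phase 5a: interval integrals of the semigroup applied to B z lie in the range of ι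
  have coreJ : ∀ z : V, ∀ τ, 0 ≤ τ → ∃ xz : X, ι xz = ∫ r in (0:ℝ)..τ, Tm1 r (B z) := by
    intro z τ hτ
    have hDz : ι (D μ0 z) = R μ0 (B z) := hD μ0 hμ0lam z
    have hIntT : IntervalIntegrable (fun r => T r (D μ0 z)) volume 0 τ := by
      apply ContinuousOn.intervalIntegrable
      apply (hTcont (D μ0 z)).mono
      rw [Set.uIcc_of_le hτ]
      exact fun r hr => hr.1
    refine ⟨μ0 • (∫ r in (0:ℝ)..τ, T r (D μ0 z)) - T τ (D μ0 z) + D μ0 z, ?_⟩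
    have h1 : ι (∫ r in (0:ℝ)..τ, T r (D μ0 z)) = ∫ r in (0:ℝ)..τ, Tm1 r (R μ0 (B z)) := by
      rw [← ι.intervalIntegral_comp_comm hIntT]
      apply intervalIntegral.integral_congr
      intro r hr
      rw [Set.uIcc_of_le hτ] at hr
      show ι (T r (D μ0 z)) = Tm1 r (R μ0 (B z))
      rw [← hinter r hr.1 (D μ0 z), hDz]
    rw [map_add, map_sub, _root_.map_smul, h1, ← hinter τ hτ (D μ0 z), hDz,
      key6 μ0 le_rfl (B z) τ hτ]
    abel
  -- Phase 5b: step functions are fine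
  have stepmem : ∀ (k : ℕ) (c : ℕ → ℝ) (vv : ℕ → V),
      (∀ i, i < k → 0 ≤ c i ∧ c i ≤ c (i+1) ∧ c (i+1) ≤ t) →
      IntegrableOn (fun s => ∑ i ∈ Finset.range k,
        Set.indicator (Set.Ioc (c i) (c (i+1))) (fun _ => vv i) s) (Set.Ioc 0 t) ∧
      ∃ x : X, ι x = ∫ s in Set.Ioc (0:ℝ) t, Tm1 (t - s) (B (∑ i ∈ Finset.range k,
        Set.indicator (Set.Ioc (c i) (c (i+1))) (fun _ => vv i) s)) := by
    intro k c vv hc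
    constructor
    · apply integrable_finset_sum
      intro i _
      have h1 : IntegrableOn (fun _ => vv i) (Set.Ioc (c i) (c (i+1))) :=
        integrableOn_const measure_Ioc_lt_top.ne
      exact ((integrable_indicator_iff measurableSet_Ioc).mpr h1).integrableOn
    · have hpt : ∀ s : ℝ, Tm1 (t - s) (B (∑ i ∈ Finset.range k,
          Set.indicator (Set.Ioc (c i) (c (i+1))) (fun _ => vv i) s)) =
          ∑ i ∈ Finset.range k,
            Set.indicator (Set.Ioc (c i) (c (i+1))) (fun s' => Tm1 (t - s') (B (vv i))) s := by
        intro s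
        rw [map_sum, map_sum]
        apply Finset.sum_congr rfl
        intro i _
        by_cases hs : s ∈ Set.Ioc (c i) (c (i+1))
        · rw [Set.indicator_of_mem hs, Set.indicator_of_mem hs]
        · rw [Set.indicator_of_notMem hs, Set.indicator_of_notMem hs, map_zero, map_zero]
      have hint_i : ∀ i ∈ Finset.range k, IntegrableOn (fun s =>
          Set.indicator (Set.Ioc (c i) (c (i+1))) (fun s' => Tm1 (t - s') (B (vv i))) s)
          (Set.Ioc 0 t) := by
        intro i hi
        obtain ⟨h0, h1, h2⟩ := hc i (Finset.mem_range.mp hi)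
        have hcont : ContinuousOn (fun s' => Tm1 (t - s') (B (vv i)))
            (Set.Icc (c i) (c (i+1))) := by
          apply (hTm1cont (B (vv i))).comp (continuous_const.sub continuous_id).continuousOn
          intro s' hs'
          exact sub_nonneg.mpr (le_trans hs'.2 h2)
        have hIOn : IntegrableOn (fun s' => Tm1 (t - s') (B (vv i)))
            (Set.Ioc (c i) (c (i+1))) :=
          (hcont.integrableOn_Icc).mono_set Set.Ioc_subset_Icc_self
        exact ((integrable_indicator_iff measurableSet_Ioc).mpr hIOn).integrableOn
      have hsum : ∫ s in Set.Ioc (0:ℝ) t, Tm1 (t - s) (B (∑ i ∈ Finset.range k,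
          Set.indicator (Set.Ioc (c i) (c (i+1))) (fun _ => vv i) s)) =
          ∑ i ∈ Finset.range k,
            ∫ s in Set.Ioc (c i) (c (i+1)), Tm1 (t - s) (B (vv i)) := by
        rw [setIntegral_congr_fun measurableSet_Ioc (fun s _ => hpt s),
          integral_finset_sum _ hint_i]
        apply Finset.sum_congr rfl
        intro i hi
        obtain ⟨h0, h1, h2⟩ := hc i (Finset.mem_range.mp hi)
        rw [integral_indicator measurableSet_Ioc, Measure.restrict_restrict measurableSet_Ioc,
          Set.inter_eq_self_of_subset_left (Set.Ioc_subset_Ioc h0 h2)]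
      have hterm : ∀ i, i < k →
          ∃ xi : X, ι xi = ∫ s in Set.Ioc (c i) (c (i+1)), Tm1 (t - s) (B (vv i)) := by
        intro i hik
        obtain ⟨h0, h1, h2⟩ := hc i hik
        obtain ⟨xa, hxa⟩ := coreJ (vv i) (t - c i) (by linarith)
        obtain ⟨xb, hxb⟩ := coreJ (vv i) (t - c (i+1)) (by linarith)
        have hII : ∀ a b : ℝ, 0 ≤ a → a ≤ b →
            IntervalIntegrable (fun r => Tm1 r (B (vv i))) volume a b := by
          intro a b ha hab
          apply ContinuousOn.intervalIntegrable
          apply (hTm1cont (B (vv i))).mono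
          rw [Set.uIcc_of_le hab]
          exact fun r hr => le_trans ha hr.1
        refine ⟨xa - xb, ?_⟩
        rw [map_sub, hxa, hxb, ← intervalIntegral.integral_of_le h1,
          intervalIntegral.integral_comp_sub_left (fun r => Tm1 r (B (vv i))) t,
          ← intervalIntegral.integral_add_adjacent_intervals
            (hII 0 (t - c (i+1)) le_rfl (by linarith))
            (hII (t - c (i+1)) (t - c i) (by linarith) (by linarith))]
        abel
      choose xi hxi using hterm
      refine ⟨∑ i ∈ (Finset.range k).attach, xi i.1 (Finset.mem_range.mp i.2), ?_⟩
      rw [map_sum, hsum, ← Finset.sum_attach (Finset.range k)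
        (fun i => ∫ s in Set.Ioc (c i) (c (i+1)), Tm1 (t - s) (B (vv i)))]
      apply Finset.sum_congr rfl
      intro i _
      exact hxi i.1 (Finset.mem_range.mp i.2)
  -- Phase 5c: approximation by step functions
  have happrox : ∀ ε : ℝ, 0 < ε → ∃ w : ℝ → V, IntegrableOn w (Set.Ioc 0 t) ∧
      (∃ x : X, ι x = ∫ s in Set.Ioc (0:ℝ) t, Tm1 (t - s) (B (w s))) ∧
      ∫ s in Set.Ioc (0:ℝ) t, ‖v s - w s‖ ≤ ε := by
    intro ε hε
    have hf : Integrable ((Set.Ioc (0:ℝ) t).indicator v) volume :=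
      (integrable_indicator_iff measurableSet_Ioc).mpr hv
    obtain ⟨g, hgsupp, hgint, hgcont, hgInt⟩ :=
      hf.exists_hasCompactSupport_integral_sub_le (half_pos hε)
    have hunif := (isCompact_Icc (a := (0:ℝ)) (b := t)).uniformContinuousOn_of_continuous
      hgcont.continuousOn
    rw [Metric.uniformContinuousOn_iff] at hunif
    set ε' : ℝ := ε / (2 * (t + 1)) with hε'def
    have hε'pos : 0 < ε' := by positivity
    obtain ⟨δ, hδpos, hδ⟩ := hunif ε' hε'pos
    obtain ⟨k, hk⟩ := exists_nat_gt (t / δ)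
    have hkpos : 0 < (k:ℝ) := lt_of_le_of_lt (div_nonneg ht.le hδpos.le) hk
    have htknn : 0 ≤ t / (k:ℝ) := div_nonneg ht.le hkpos.le
    have htk : t / (k:ℝ) < δ := by
      rw [div_lt_iff₀ hkpos]
      rw [div_lt_iff₀ hδpos] at hk
      nlinarith
    set c : ℕ → ℝ := fun i => (i:ℝ) * (t / k) with hcdef
    set vv : ℕ → V := fun i => g (c (i+1)) with hvvdef
    set w : ℝ → V := fun s => ∑ i ∈ Finset.range k,
      Set.indicator (Set.Ioc (c i) (c (i+1))) (fun _ => vv i) s with hwdef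
    have hcprop : ∀ i, i < k → 0 ≤ c i ∧ c i ≤ c (i+1) ∧ c (i+1) ≤ t := by
      intro i hik
      refine ⟨by positivity, ?_, ?_⟩
      · apply mul_le_mul_of_nonneg_right _ htknn
        push_cast
        linarith
      · have h1 : ((i:ℝ)+1) ≤ (k:ℝ) := by exact_mod_cast hik
        calc ((i+1 : ℕ):ℝ) * (t/k) ≤ (k:ℝ) * (t/k) := by
              apply mul_le_mul_of_nonneg_right _ htknn
              push_cast
              linarith
          _ = t := by field_simp
    obtain ⟨hwint, hwmem⟩ := stepmem k c vv hcprop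
    refine ⟨w, hwint, hwmem, ?_⟩
    have hgw : ∀ s ∈ Set.Ioc (0:ℝ) t, ‖g s - w s‖ ≤ ε' := by
      intro s hs
      have htne : (t:ℝ) ≠ 0 := ne_of_gt ht
      have hkne : (k:ℝ) ≠ 0 := ne_of_gt hkpos
      set m : ℕ := ⌈s * k / t⌉₊ with hmdef
      have hm1 : 1 ≤ m := by
        rw [hmdef]
        apply Nat.one_le_iff_ne_zero.mpr
        apply Nat.pos_iff_ne_zero.mp
        apply Nat.ceil_pos.mpr
        have := hs.1
        positivity
      have hmk : m ≤ k := by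
        rw [hmdef]
        apply Nat.ceil_le.mpr
        rw [div_le_iff₀ ht]
        calc s * (k:ℝ) ≤ t * k := mul_le_mul_of_nonneg_right hs.2 hkpos.le
          _ = (k:ℝ) * t := by ring
      have hi : m - 1 < k := by omega
      have hc1 : c (m-1) < s := by
        have h1 : ((m - 1 : ℕ):ℝ) < s * k / t := by
          apply Nat.lt_ceil.mp
          omega
        have h2 : ((m - 1 : ℕ):ℝ) * (t/k) < (s * k / t) * (t/k) :=
          mul_lt_mul_of_pos_right h1 (by positivity)
        calc c (m-1) = ((m - 1 : ℕ):ℝ) * (t/k) := rfl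
          _ < (s * k / t) * (t/k) := h2
          _ = s := by field_simp
      have hc2 : s ≤ c (m-1+1) := by
        have hm' : m - 1 + 1 = m := by omega
        rw [hm']
        have h1 : s * k / t ≤ (m:ℝ) := Nat.le_ceil _
        have h2 : (s * k / t) * (t/k) ≤ (m:ℝ) * (t/k) :=
          mul_le_mul_of_nonneg_right h1 htknn
        calc s = (s * k / t) * (t/k) := by field_simp
          _ ≤ (m:ℝ) * (t/k) := h2
          _ = c m := rfl
      have hw_eq : w s = vv (m-1) := by
        rw [hwdef]
        simp only []
        rw [Finset.sum_eq_single_of_mem (m-1) (Finset.mem_range.mpr hi)]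
        · exact Set.indicator_of_mem (Set.mem_Ioc.mpr ⟨hc1, hc2⟩) _
        · intro j _ hne
          apply Set.indicator_of_notMem
          intro hsj
          rcases lt_or_gt_of_ne hne with hlt | hgt
          · have h1 : c (j+1) ≤ c (m-1) := by
              apply mul_le_mul_of_nonneg_right _ htknn
              push_cast [Nat.cast_sub hm1]
              have : (j:ℝ) + 1 ≤ (m:ℝ) - 1 := by
                have : j + 1 ≤ m - 1 := by omega
                have := (Nat.cast_le (α := ℝ)).mpr this
                push_cast [Nat.cast_sub hm1] at this
                linarith
              linarith
            linarith [hsj.2, hc1]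
          · have h1 : c (m-1+1) ≤ c j := by
              apply mul_le_mul_of_nonneg_right _ htknn
              have : m - 1 + 1 ≤ j := by omega
              exact_mod_cast this
            linarith [hsj.1, hc2]
      rw [hw_eq]
      have hsm : s ∈ Set.Icc (0:ℝ) t := ⟨hs.1.le, hs.2⟩
      have hcm : c (m-1+1) ∈ Set.Icc (0:ℝ) t := by
        obtain ⟨h0, h1, h2⟩ := hcprop (m-1) hi
        exact ⟨le_trans h0 h1, h2⟩
      have hdd : dist s (c (m-1+1)) ≤ t/k := by
        rw [Real.dist_eq, abs_of_nonpos (by linarith [hc2])]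
        have hck : c (m-1+1) - c (m-1) = t/k := by
          show ((m-1+1 : ℕ):ℝ) * (t/k) - ((m-1:ℕ):ℝ) * (t/k) = t/k
          push_cast
          ring
        linarith [hc1]
      have := hδ s hsm (c (m-1+1)) hcm (lt_of_le_of_lt hdd htk)
      rw [dist_eq_norm] at this
      exact this.le
    -- integral estimates
    have hvg_int : IntegrableOn (fun s => ‖v s - g s‖) (Set.Ioc 0 t) :=
      (hv.sub hgInt.integrableOn).norm
    have hgw_int : IntegrableOn (fun s => ‖g s - w s‖) (Set.Ioc 0 t) :=
      ((hgInt.integrableOn).sub hwint).norm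
    have hvw_int : IntegrableOn (fun s => ‖v s - w s‖) (Set.Ioc 0 t) :=
      (hv.sub hwint).norm
    have h1 : ∫ s in Set.Ioc (0:ℝ) t, ‖v s - w s‖ ≤
        ∫ s in Set.Ioc (0:ℝ) t, (‖v s - g s‖ + ‖g s - w s‖) := by
      apply setIntegral_mono_on hvw_int (hvg_int.add hgw_int) measurableSet_Ioc
      intro s _
      exact norm_sub_le_norm_sub_add_norm_sub _ _ _
    rw [integral_add hvg_int hgw_int] at h1
    have h2 : ∫ s in Set.Ioc (0:ℝ) t, ‖v s - g s‖ ≤ ε/2 := by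
      have heq : Set.EqOn (fun s => ‖v s - g s‖)
          (fun s => ‖(Set.Ioc (0:ℝ) t).indicator v s - g s‖) (Set.Ioc 0 t) := by
        intro s hs
        simp only [Set.indicator_of_mem hs]
      rw [setIntegral_congr_fun measurableSet_Ioc heq]
      exact le_trans (setIntegral_le_integral ((hf.sub hgInt).norm)
        (Filter.Eventually.of_forall fun s => norm_nonneg _)) hgint
    have h3 : ∫ s in Set.Ioc (0:ℝ) t, ‖g s - w s‖ ≤ t * ε' := by
      calc ∫ s in Set.Ioc (0:ℝ) t, ‖g s - w s‖ ≤ ∫ _ in Set.Ioc (0:ℝ) t, ε' := by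
            apply setIntegral_mono_on hgw_int
              (integrableOn_const measure_Ioc_lt_top.ne) measurableSet_Ioc hgw
        _ = t * ε' := by
            rw [setIntegral_const, Real.volume_real_Ioc_of_le ht.le, smul_eq_mul]
            ring_nf
    have h4 : t * ε' ≤ ε/2 := by
      rw [hε'def, mul_div_assoc']
      rw [div_le_div_iff₀ (by positivity) (by norm_num)]
      nlinarith
    linarith
  -- Phase 5d: assembly
  set Econst : ℝ := M' * Real.exp (|ω| * t) * ‖B‖ with hEdef
  have hEnn : 0 ≤ Econst := by positivity
  have hPhiNorm : ∀ u : ℝ → V, IntegrableOn u (Set.Ioc 0 t) →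
      ‖∫ s in Set.Ioc (0:ℝ) t, Tm1 (t - s) (B (u s))‖ ≤
        Econst * ∫ s in Set.Ioc (0:ℝ) t, ‖u s‖ := by
    intro u hu
    have hEu : Integrable (fun s => Econst * ‖u s‖) (volume.restrict (Set.Ioc (0:ℝ) t)) :=
      hu.norm.const_mul Econst
    have := norm_integral_le_of_norm_le (f := fun s => Tm1 (t - s) (B (u s))) hEu ?_
    · rw [integral_const_mul] at this
      exact this
    · rw [ae_restrict_iff' measurableSet_Ioc]
      filter_upwards with s hs
      have hts : (0:ℝ) ≤ t - s := by linarith [hs.2]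
      have hωt : ω * (t - s) ≤ |ω| * t := by
        calc ω * (t - s) ≤ |ω| * (t - s) := mul_le_mul_of_nonneg_right (le_abs_self _) hts
          _ ≤ |ω| * t := mul_le_mul_of_nonneg_left (by linarith [hs.1]) (abs_nonneg _)
      calc ‖Tm1 (t - s) (B (u s))‖ ≤ ‖Tm1 (t - s)‖ * ‖B (u s)‖ := (Tm1 _).le_opNorm _
        _ ≤ (M' * Real.exp (|ω| * t)) * (‖B‖ * ‖u s‖) := by
            apply mul_le_mul _ (B.le_opNorm _) (norm_nonneg _) (by positivity)
            exact le_trans (hM' _ hts) (mul_le_mul_of_nonneg_left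
              (Real.exp_le_exp.mpr hωt) (by linarith))
        _ = Econst * ‖u s‖ := by rw [hEdef]; ring
  have hPhiSub : ∀ u₁ u₂ : ℝ → V, IntegrableOn u₁ (Set.Ioc 0 t) →
      IntegrableOn u₂ (Set.Ioc 0 t) →
      ∫ s in Set.Ioc (0:ℝ) t, Tm1 (t - s) (B (u₁ s - u₂ s)) =
      (∫ s in Set.Ioc (0:ℝ) t, Tm1 (t - s) (B (u₁ s))) -
        ∫ s in Set.Ioc (0:ℝ) t, Tm1 (t - s) (B (u₂ s)) := by
    intro u₁ u₂ h₁ h₂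
    rw [← integral_sub (hintV u₁ h₁) (hintV u₂ h₂)]
    apply setIntegral_congr_fun measurableSet_Ioc
    intro s _
    simp only [map_sub]
  have hex : ∀ n : ℕ, ∃ w : ℝ → V, IntegrableOn w (Set.Ioc 0 t) ∧
      (∃ x : X, ι x = ∫ s in Set.Ioc (0:ℝ) t, Tm1 (t - s) (B (w s))) ∧
      ∫ s in Set.Ioc (0:ℝ) t, ‖v s - w s‖ ≤ 1/((n:ℝ)+1) :=
    fun n => happrox (1/((n:ℝ)+1)) (by positivity)
  choose w hwint hwmem hwb using hex
  choose xs hxs using hwmem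
  have hwdist : ∀ n : ℕ, ∫ s in Set.Ioc (0:ℝ) t, ‖w n s - v s‖ ≤ 1/((n:ℝ)+1) := by
    intro n
    have heq : Set.EqOn (fun s => ‖w n s - v s‖) (fun s => ‖v s - w n s‖) (Set.Ioc 0 t) := by
      intro s _
      exact norm_sub_rev _ _
    rw [setIntegral_congr_fun measurableSet_Ioc heq]
    exact hwb n
  have hwwdist : ∀ n m : ℕ, ∫ s in Set.Ioc (0:ℝ) t, ‖w n s - w m s‖ ≤
      1/((n:ℝ)+1) + 1/((m:ℝ)+1) := by
    intro n m
    have hintnm : IntegrableOn (fun s => ‖w n s - w m s‖) (Set.Ioc 0 t) :=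
      ((hwint n).sub (hwint m)).norm
    have hA : IntegrableOn (fun s => ‖w n s - v s‖) (Set.Ioc 0 t) := ((hwint n).sub hv).norm
    have hB : IntegrableOn (fun s => ‖v s - w m s‖) (Set.Ioc 0 t) := (hv.sub (hwint m)).norm
    have h1 : ∫ s in Set.Ioc (0:ℝ) t, ‖w n s - w m s‖ ≤
        ∫ s in Set.Ioc (0:ℝ) t, (‖w n s - v s‖ + ‖v s - w m s‖) := by
      apply setIntegral_mono_on hintnm (hA.add hB) measurableSet_Ioc
      intro s _
      exact norm_sub_le_norm_sub_add_norm_sub _ _ _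
    rw [integral_add hA hB] at h1
    exact le_trans h1 (add_le_add (hwdist n) (hwb m))
  have hCauchy : CauchySeq xs := by
    refine cauchySeq_of_le_tendsto_0 (fun N => K * (2/((N:ℝ)+1))) ?_ ?_
    · intro n m N hn hm
      rw [dist_eq_norm]
      have hι : ι (xs n - xs m) = ∫ s in Set.Ioc (0:ℝ) t,
          Tm1 (t - s) (B ((fun s => w n s - w m s) s)) := by
        rw [map_sub, hxs n, hxs m, ← hPhiSub (w n) (w m) (hwint n) (hwint m)]
      have hb := hbound (fun s => w n s - w m s) ((hwint n).sub (hwint m)) (xs n - xs m) hι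
      apply le_trans hb
      have h2 : ∫ s in Set.Ioc (0:ℝ) t, ‖w n s - w m s‖ ≤ 2/((N:ℝ)+1) := by
        apply le_trans (hwwdist n m)
        have e1 : 1/((n:ℝ)+1) ≤ 1/((N:ℝ)+1) := by
          apply one_div_le_one_div_of_le (by positivity)
          have : (N:ℝ) ≤ n := Nat.cast_le.mpr hn
          linarith
        have e2 : 1/((m:ℝ)+1) ≤ 1/((N:ℝ)+1) := by
          apply one_div_le_one_div_of_le (by positivity)
          have : (N:ℝ) ≤ m := Nat.cast_le.mpr hm
          linarith
        calc 1/((n:ℝ)+1) + 1/((m:ℝ)+1) ≤ 1/((N:ℝ)+1) + 1/((N:ℝ)+1) := add_le_add e1 e2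
          _ = 2/((N:ℝ)+1) := by ring
      exact mul_le_mul_of_nonneg_left h2 hKnn
    · have h0 : Filter.Tendsto (fun N : ℕ => 2/((N:ℝ)+1)) Filter.atTop (𝓝 0) := by
        apply Filter.Tendsto.div_atTop tendsto_const_nhds
        exact Filter.tendsto_atTop_add_const_right _ 1 tendsto_natCast_atTop_atTop
      have := h0.const_mul K
      simpa using this
  obtain ⟨xl, hxl⟩ := cauchySeq_tendsto_of_complete hCauchy
  refine ⟨xl, ?_⟩
  rw [intervalIntegral.integral_of_le ht.le]
  have ha : Filter.Tendsto (fun n => ι (xs n)) Filter.atTop (𝓝 (ι xl)) :=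
    (ι.continuous.tendsto xl).comp hxl
  have hb : Filter.Tendsto (fun n => ι (xs n)) Filter.atTop
      (𝓝 (∫ s in Set.Ioc (0:ℝ) t, Tm1 (t - s) (B (v s)))) := by
    rw [← tendsto_sub_nhds_zero_iff]
    have hbnd : ∀ n : ℕ, ‖ι (xs n) - ∫ s in Set.Ioc (0:ℝ) t, Tm1 (t - s) (B (v s))‖ ≤
        Econst * (1/((n:ℝ)+1)) := by
      intro n
      rw [hxs n, ← hPhiSub (w n) v (hwint n) hv]
      apply le_trans (hPhiNorm (fun s => w n s - v s) ((hwint n).sub hv))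
      exact mul_le_mul_of_nonneg_left (hwdist n) hEnn
    apply squeeze_zero_norm hbnd
    have h0 : Filter.Tendsto (fun n : ℕ => 1/((n:ℝ)+1)) Filter.atTop (𝓝 0) := by
      apply Filter.Tendsto.div_atTop tendsto_const_nhds
      exact Filter.tendsto_atTop_add_const_right _ 1 tendsto_natCast_atTop_atTop
    have := h0.const_mul Econst
    simpa using this
  exact tendsto_nhds_unique ha hb
end
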